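/- arXiv:1710.02290 — 7 statements merged into one kernel-verified Lean document; each statement's English description precedes it below -/
import Mathlib

section
/- Let M be a positive definite real symmetric n×n matrix and α a vector in ℝ^n. Then M - α αᵀ is positive semidefinite if and only if αᵀ M⁻¹ α ≤ 1. -/
open Matrix

namespace Matrix

theorem posSemidef_iff_nonneg_of_unique {R ι : Type*} [Ring R] [PartialOrder R] [StarRing R]
    [StarOrderedRing R] [Unique ι] {A : Matrix ι ι R} :
    A.PosSemidef ↔ 0 ≤ A default default := by
  have hA : A = diagonal fun _ ↦ A default default := by
    ext i j
    simp [Subsingleton.elim i default, Subsingleton.elim j default]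
  rw [hA, posSemidef_diagonal_iff]
  simp

theorem PosDef.posSemidef_sub_vecMulVec_iff {ι K : Type*} [Fintype ι] [DecidableEq ι] [Field K]
    [PartialOrder K] [StarRing K] [StarOrderedRing K] {M : Matrix ι ι K} (hM : M.PosDef)
    (a : ι → K) :
    (M - vecMulVec a (star a)).PosSemidef ↔ star a ⬝ᵥ (M⁻¹ *ᵥ a) ≤ 1 := by
  have := hM.isUnit.invertible
  have : Invertible (1 : Matrix Unit Unit K) := invertibleOne
  set B := replicateCol Unit a
  have hB : B * (1 : Matrix Unit Unit K)⁻¹ * Bᴴ = vecMulVec a (star a) := by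
    simp [B, vecMulVec_eq Unit, conjTranspose_replicateCol]
  -- Both sides say that `fromBlocks M B Bᴴ 1` is positive semidefinite: they are its Schur
  -- complements with respect to the two diagonal blocks.
  rw [← hB, ← PosDef.fromBlocks₂₂ M B .one, PosDef.fromBlocks₁₁ B 1 hM,
    posSemidef_iff_nonneg_of_unique, conjTranspose_replicateCol, Matrix.mul_assoc,
    ← replicateCol_mulVec, sub_apply, one_apply_eq, replicateRow_mul_replicateCol_apply,
    sub_nonneg]

end Matrix

theorem stmt0 {n : ℕ} (M : Matrix (Fin n) (Fin n) ℝ) (hM : M.PosDef)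
    (α : Fin n → ℝ) :
    (M - vecMulVec α α).PosSemidef ↔ α ⬝ᵥ (M⁻¹ *ᵥ α) ≤ 1 := by
  simpa using hM.posSemidef_sub_vecMulVec_iff α
end

section
/- Let A be positive definite symmetric n×n, H a q×n matrix, Ψ positive definite symmetric q×q, and F any n×n matrix. Then F (A⁻¹ - (A + Hᵀ Ψ⁻¹ H)⁻¹) Fᵀ is positive semidefinite. (This shows MSEM(LTE) - MSEM(SRLTE) ≥ 0, i.e., the stochastic restricted Liu-type estimator always dominates the Liu-type estimator.) -/
/-!
Since `Hᵀ Ψ⁻¹ H` is positive semidefinite, `A ≤ A + Hᵀ Ψ⁻¹ H` in the Löwner order, and matrix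
inversion is antitone on positive definite matrices; congruence by `F` preserves positivity.
-/

open Matrix

/-- Both Schur complements of `[[B, 1], [1, A⁻¹]]` control its positivity: the one of `A⁻¹` is
`B - A`, the one of `B` is `A⁻¹ - B⁻¹`. -/
theorem Matrix.PosDef.posSemidef_inv_sub_inv {m K : Type*} [Fintype m] [DecidableEq m]
    [Field K] [PartialOrder K] [StarRing K] [StarOrderedRing K]
    {A B : Matrix m m K} (hA : A.PosDef) (hB : B.PosDef) (hBA : (B - A).PosSemidef) :
    (A⁻¹ - B⁻¹).PosSemidef := by
  let _ := hA.isUnit.invertible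
  let _ := hB.isUnit.invertible
  have hM : (fromBlocks B 1 1ᴴ A⁻¹).PosSemidef := by
    rw [PosDef.fromBlocks₂₂ _ _ hA.inv, inv_inv_of_invertible]
    simpa using hBA
  simpa using (PosDef.fromBlocks₁₁ _ _ hB).1 hM

theorem stmt4 {n q : ℕ} (A : Matrix (Fin n) (Fin n) ℝ) (hA : A.PosDef)
    (H : Matrix (Fin q) (Fin n) ℝ)
    (Ψ : Matrix (Fin q) (Fin q) ℝ) (hΨ : Ψ.PosDef)
    (F : Matrix (Fin n) (Fin n) ℝ) :
    (F * (A⁻¹ - (A + Hᵀ * Ψ⁻¹ * H)⁻¹) * Fᵀ).PosSemidef := by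
  have hC : (Hᵀ * Ψ⁻¹ * H).PosSemidef := by
    simpa using hΨ.inv.posSemidef.conjTranspose_mul_mul_same H
  have hAC := hA.posSemidef_inv_sub_inv (hA.add_posSemidef hC) (by simpa using hC)
  simpa using hAC.mul_mul_conjTranspose_same F
end

section
/- Let C be a positive definite symmetric real matrix and let F_{kd} = (C + kI)⁻¹(C - dI) with k > 0. If the largest eigenvalue of F_{kd} S⁻¹ F_{kd} S is less than 1, where S = C + HᵀΨ⁻¹H is positive definite, then D₁ = S⁻¹ - F_{kd} S⁻¹ F_{kd} is positive definite; moreover, setting b₁ = (d+k)(C + kI)⁻¹β, the matrix S⁻¹ - F_{kd} S⁻¹ F_{kd} - b₁b₁ᵀ is positive semidefinite if and only if b₁ᵀ D₁⁻¹ b₁ ≤ 1. -/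
/-!
With `P = S⁻¹` and `M = F S⁻¹ F` (Hermitian, since `F` is a product of commuting Hermitian
matrices), write `P = G²` with `G = √P`. Then `P - M = G (1 - G⁻¹ M G⁻¹) G`, and `G⁻¹ M G⁻¹` is
conjugate to `M P⁻¹ = F S⁻¹ F S`, so its eigenvalues are below `1` and `D₁ = P - M` is positive
definite. The second part is the Schur complement criterion applied twice to the block matrix
`[[D₁, b₁], [b₁ᵀ, 1]]`.
-/

open Matrix
open scoped ComplexOrder Pointwise

section

variable {n 𝕜 : Type*} [Fintype n] [DecidableEq n] [RCLike 𝕜]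

theorem Matrix.commute_nonsing_inv_left {A B : Matrix n n 𝕜} (h : Commute A B) :
    Commute A⁻¹ B := by
  by_cases hA : IsUnit A.det
  · let := A.invertibleOfIsUnitDet hA
    simpa [← invOf_eq_nonsing_inv] using h.invOf_left
  · simp [nonsing_inv_apply_not_isUnit _ hA]

theorem Matrix.IsHermitian.nonsing_inv_mul {A B : Matrix n n 𝕜} (hA : A.IsHermitian)
    (hB : B.IsHermitian) (hAB : Commute A B) : (A⁻¹ * B).IsHermitian := by
  rw [IsHermitian, conjTranspose_mul, hB.eq, hA.inv.eq]
  exact (commute_nonsing_inv_left hAB).eq.symm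

theorem Matrix.IsHermitian.posDef_one_sub {M : Matrix n n 𝕜} (hM : M.IsHermitian)
    (h : ∀ μ ∈ spectrum ℝ M, μ < 1) : (1 - M).PosDef := by
  have hsub : (1 - M).IsHermitian := isHermitian_one.sub hM
  refine hsub.posDef_iff_eigenvalues_pos.mpr fun i => ?_
  obtain ⟨_, rfl, μ, hμ, hμi⟩ : hsub.eigenvalues i ∈ {1} - spectrum ℝ M := by
    rw [spectrum.singleton_sub_eq, map_one]
    exact hsub.eigenvalues_mem_spectrum_real i
  linarith [h μ hμ]

open scoped MatrixOrder in
theorem Matrix.PosDef.sub_of_spectrum_mul_inv_lt_one {P M : Matrix n n 𝕜} (hP : P.PosDef)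
    (hM : M.IsHermitian) (h : ∀ μ ∈ spectrum ℝ (M * P⁻¹), μ < 1) : (P - M).PosDef := by
  set G := CFC.sqrt P
  have hGu : IsUnit G := (CFC.isUnit_sqrt_iff P hP.posSemidef.nonneg).2 hP.isUnit
  have hGs : Gᴴ = G := (CFC.sqrt_nonneg P).posSemidef.1
  have hGG : G * G = P := CFC.sqrt_mul_sqrt_self P hP.posSemidef.nonneg
  have hGinv : G⁻¹ * G = 1 := nonsing_inv_mul G ((isUnit_iff_isUnit_det G).mp hGu)
  have hGinv' : G * G⁻¹ = 1 := mul_nonsing_inv G ((isUnit_iff_isUnit_det G).mp hGu)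
  have hPM : P - M = star G * (1 - G⁻¹ * M * G⁻¹) * G := by
    rw [star_eq_conjTranspose, hGs, ← hGG]
    simp only [mul_sub, sub_mul, mul_one, Matrix.mul_assoc, hGinv, ← Matrix.mul_assoc G G⁻¹,
      hGinv', one_mul]
  rw [hPM, hGu.posDef_star_left_conjugate_iff]
  refine IsHermitian.posDef_one_sub ?_ fun μ hμ => h μ ?_
  · simpa [conjTranspose_nonsing_inv, hGs] using isHermitian_conjTranspose_mul_mul G⁻¹ hM
  · have hconj : G⁻¹ * M * G⁻¹ = ((hGu.unit⁻¹ : (Matrix n n 𝕜)ˣ) : Matrix n n 𝕜) * (M * P⁻¹) *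
        ((hGu.unit⁻¹⁻¹ : (Matrix n n 𝕜)ˣ) : Matrix n n 𝕜) := by
      simp [← hGG, Matrix.mul_inv_rev, Matrix.mul_assoc, hGinv]
    rwa [hconj, spectrum.units_conjugate] at hμ

theorem Matrix.posSemidef_unique_iff {ι : Type*} [Unique ι] {A : Matrix ι ι ℝ} :
    A.PosSemidef ↔ 0 ≤ A default default := by
  classical
  have : A = diagonal fun _ => A default default := by
    ext i j
    simp [Subsingleton.elim i default, Subsingleton.elim j default]
  rw [this]
  simp

theorem Matrix.PosDef.posSemidef_sub_vecMulVec_iff_s5 {D : Matrix n n ℝ} (hD : D.PosDef)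
    (b : n → ℝ) : (D - vecMulVec b b).PosSemidef ↔ b ⬝ᵥ (D⁻¹ *ᵥ b) ≤ 1 := by
  have := hD.isUnit.invertible
  let : Invertible (1 : Matrix Unit Unit ℝ) := invertibleOne
  have h := (PosDef.fromBlocks₂₂ D (replicateCol Unit b) PosDef.one).symm.trans
    (PosDef.fromBlocks₁₁ (replicateCol Unit b) 1 hD)
  rw [posSemidef_unique_iff (ι := Unit)] at h
  simpa [vecMulVec_eq Unit, conjTranspose_replicateCol, Matrix.mul_assoc, ← replicateCol_mulVec,
    ← mulVec_mulVec, replicateRow_mulVec_eq_const] using h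

end

theorem stmt5_general {n : ℕ} (C : Matrix (Fin n) (Fin n) ℝ) (hC : C.PosDef)
    (k d : ℝ)
    (S : Matrix (Fin n) (Fin n) ℝ)
    (hSpd : S.PosDef)
    (F : Matrix (Fin n) (Fin n) ℝ)
    (hF : F = (C + k • (1 : Matrix (Fin n) (Fin n) ℝ))⁻¹
        * (C - d • (1 : Matrix (Fin n) (Fin n) ℝ)))
    (b₁ : Fin n → ℝ)
    (hspec : ∀ μ ∈ spectrum ℝ (F * S⁻¹ * F * S), μ < 1) :
    (S⁻¹ - F * S⁻¹ * F).PosDef ∧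
      ((S⁻¹ - F * S⁻¹ * F - vecMulVec b₁ b₁).PosSemidef ↔
        b₁ ⬝ᵥ ((S⁻¹ - F * S⁻¹ * F)⁻¹ *ᵥ b₁) ≤ 1) := by
  have hFH : F.IsHermitian := by
    rw [hF]
    refine IsHermitian.nonsing_inv_mul (hC.1.add (isHermitian_one.smul (.all k)))
      (hC.1.sub (isHermitian_one.smul (.all d))) ?_
    simp only [Commute, SemiconjBy, mul_add, add_mul, mul_sub, sub_mul, mul_smul_comm,
      smul_mul_assoc, mul_one, one_mul]
    module
  have hM : (F * S⁻¹ * F).IsHermitian := by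
    have := isHermitian_conjTranspose_mul_mul F hSpd.inv.1
    rwa [hFH.eq] at this
  have hD : (S⁻¹ - F * S⁻¹ * F).PosDef := by
    refine hSpd.inv.sub_of_spectrum_mul_inv_lt_one hM ?_
    rwa [nonsing_inv_nonsing_inv S ((isUnit_iff_isUnit_det S).mp hSpd.isUnit)]
  exact ⟨hD, hD.posSemidef_sub_vecMulVec_iff_s5 b₁⟩

theorem stmt5 {n q : ℕ} (C : Matrix (Fin n) (Fin n) ℝ) (hC : C.PosDef)
    (k d : ℝ) (hk : 0 < k)
    (H : Matrix (Fin q) (Fin n) ℝ)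
    (Ψ : Matrix (Fin q) (Fin q) ℝ) (hΨ : Ψ.PosDef)
    (S : Matrix (Fin n) (Fin n) ℝ) (hS : S = C + Hᵀ * Ψ⁻¹ * H)
    (hSpd : S.PosDef)
    (β : Fin n → ℝ)
    (F : Matrix (Fin n) (Fin n) ℝ)
    (hF : F = (C + k • (1 : Matrix (Fin n) (Fin n) ℝ))⁻¹
        * (C - d • (1 : Matrix (Fin n) (Fin n) ℝ)))
    (b₁ : Fin n → ℝ)
    (hb₁ : b₁ = (d + k) • ((C + k • (1 : Matrix (Fin n) (Fin n) ℝ))⁻¹ *ᵥ β))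
    (hspec : ∀ μ ∈ spectrum ℝ (F * S⁻¹ * F * S), μ < 1) :
    (S⁻¹ - F * S⁻¹ * F).PosDef ∧
      ((S⁻¹ - F * S⁻¹ * F - vecMulVec b₁ b₁).PosSemidef ↔
        b₁ ⬝ᵥ ((S⁻¹ - F * S⁻¹ * F)⁻¹ *ᵥ b₁) ≤ 1) :=
  stmt5_general C hC k d S hSpd F hF b₁ hspec
end

section
/- Let Δ be a positive definite symmetric n×n real matrix and u₁, u₂ vectors in ℝ^n. Then Δ + u₁u₁ᵀ − u₂u₂ᵀ is positive semidefinite if and only if u₂ᵀ (Δ + u₁u₁ᵀ)⁻¹ u₂ ≤ 1. -/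
/-! Both sides say that the bordered matrix `[[A, u], [uᵀ, 1]]`, with `A = Δ + u₁u₁ᵀ` and
`u = u₂`, is positive semidefinite: `A - uuᵀ` is its Schur complement with respect to the
corner `1`, and `1 - uᵀA⁻¹u` its Schur complement with respect to the positive definite `A`. -/

open Matrix

theorem Matrix.posSemidef_iff_of_unique {ι R : Type*} [Unique ι] [Ring R] [PartialOrder R]
    [StarRing R] [StarOrderedRing R] {M : Matrix ι ι R} :
    M.PosSemidef ↔ 0 ≤ M default default := by
  have hM : M = diagonal fun _ => M default default := by
    ext i j
    simp [Unique.eq_default i, Unique.eq_default j]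
  rw [hM, posSemidef_diagonal_iff]
  simp

theorem Matrix.PosDef.posSemidef_sub_vecMulVec_iff_s10 {n K : Type*} [Fintype n] [DecidableEq n]
    [Field K] [PartialOrder K] [StarRing K] [StarOrderedRing K] {A : Matrix n n K}
    (hA : A.PosDef) (u : n → K) :
    (A - vecMulVec u (star u)).PosSemidef ↔ star u ⬝ᵥ (A⁻¹ *ᵥ u) ≤ 1 := by
  have := hA.isUnit.invertible
  have : Invertible (1 : Matrix Unit Unit K) := invertibleOne
  have schur₂₂ := PosDef.fromBlocks₂₂ A (replicateCol Unit u) (D := 1) .one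
  have schur₁₁ := PosDef.fromBlocks₁₁ (replicateCol Unit u) 1 hA
  rw [schur₂₂, inv_one, Matrix.mul_one, conjTranspose_replicateCol, ← vecMulVec_eq] at schur₁₁
  rw [schur₁₁, posSemidef_iff_of_unique, Matrix.mul_assoc, ← replicateCol_mulVec,
    replicateRow_mul_replicateCol]
  simp

theorem stmt10 {n : ℕ} (Δ : Matrix (Fin n) (Fin n) ℝ) (hΔ : Δ.PosDef)
    (u₁ u₂ : Fin n → ℝ) :
    (Δ + vecMulVec u₁ u₁ - vecMulVec u₂ u₂).PosSemidef ↔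
      u₂ ⬝ᵥ ((Δ + vecMulVec u₁ u₁)⁻¹ *ᵥ u₂) ≤ 1 := by
  have hA : (Δ + vecMulVec u₁ u₁).PosDef :=
    hΔ.add_posSemidef (by simpa using posSemidef_vecMulVec_self_star u₁)
  simpa using hA.posSemidef_sub_vecMulVec_iff_s10 u₂
end

section
/- Let C be symmetric positive definite with all eigenvalues λᵢ, let k > 0 and d ∈ ℝ. If |λᵢ − d| < λᵢ + k for every eigenvalue λᵢ of C (equivalently −k < d and d < 2λᵢ + k), then for S = C + HᵀΨ⁻¹H = C (i.e., H = 0), the matrix C⁻¹ − F_{kd} C⁻¹ F_{kd} is positive definite, where F_{kd} = (C+kI)⁻¹(C−dI). -/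
/-!
Every matrix in sight is a function of `C`: with `f λ = (λ + k)⁻¹ (λ - d)` we have `F = f(C)`,
which is symmetric, so `C⁻¹ - F C⁻¹ Fᵀ = g(C)` for `g λ = (1 - f(λ)²) / λ`. The hypothesis
`|λ - d| < λ + k` says exactly `|f λ| < 1`, so `g` is positive on the spectrum of `C`, and the
continuous functional calculus turns this into positive definiteness of `g(C)`.
-/

open Matrix
open scoped Ring MatrixOrder

lemma inv_sub_mul_inv_mul_pos {K : Type*} [Field K] [LinearOrder K] [IsStrictOrderedRing K]
    {x k d : K} (hx : 0 < x) (h : |x - d| < x + k) :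
    0 < x⁻¹ - (x + k)⁻¹ * (x - d) * x⁻¹ * ((x + k)⁻¹ * (x - d)) := by
  have hxk : 0 < x + k := (abs_nonneg _).trans_lt h
  have hsq : ((x + k)⁻¹ * (x - d)) ^ 2 < 1 := by
    rwa [sq_lt_one_iff_abs_lt_one, abs_mul, abs_inv, abs_of_pos hxk, inv_mul_lt_one₀ hxk]
  calc 0 < (1 - ((x + k)⁻¹ * (x - d)) ^ 2) * x⁻¹ := mul_pos (sub_pos.mpr hsq) (inv_pos.mpr hx)
    _ = x⁻¹ - (x + k)⁻¹ * (x - d) * x⁻¹ * ((x + k)⁻¹ * (x - d)) := by ring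

section CFC

variable {A : Type*} [Ring A] [StarRing A] [TopologicalSpace A] [Algebra ℝ A]
  [ContinuousFunctionalCalculus ℝ A IsSelfAdjoint]

lemma cfc_inv_add_const_mul_sub_const {a : A} (ha : IsSelfAdjoint a) {k : ℝ} (d : ℝ)
    (hk : ∀ x ∈ spectrum ℝ a, x + k ≠ 0) :
    cfc (fun x => (x + k)⁻¹ * (x - d)) a = (a + algebraMap ℝ A k)⁻¹ʳ * (a - algebraMap ℝ A d) := by
  rw [cfc_mul _ _ a (by fun_prop (disch := assumption)), cfc_inv (· + k) a hk,
    cfc_add_const k (fun x => x) a, cfc_sub (fun x => x) (fun _ => d) a, cfc_id' ℝ a,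
    cfc_const d a]

variable [PartialOrder A] [StarOrderedRing A] [NonnegSpectrumClass ℝ A]

theorem IsStrictlyPositive.ringInverse_sub_mul_ringInverse_mul_star {a : A}
    (ha : IsStrictlyPositive a) {k d : ℝ} (h : ∀ x ∈ spectrum ℝ a, |x - d| < x + k) (F : A)
    (hF : F = (a + algebraMap ℝ A k)⁻¹ʳ * (a - algebraMap ℝ A d)) :
    IsStrictlyPositive (a⁻¹ʳ - F * a⁻¹ʳ * star F) := by
  have hpos : ∀ x ∈ spectrum ℝ a, 0 < x := fun x hx => ha.spectrum_pos hx
  have hx : ∀ x ∈ spectrum ℝ a, x ≠ 0 := fun x hx => (hpos x hx).ne'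
  have hk : ∀ x ∈ spectrum ℝ a, x + k ≠ 0 := fun x hx => ((abs_nonneg _).trans_lt (h x hx)).ne'
  rw [hF, ← cfc_inv_add_const_mul_sub_const ha.isSelfAdjoint d hk,
    (cfc_predicate (R := ℝ) _ a : IsSelfAdjoint _).star_eq,
    ← cfc_ringInverse_id (R := ℝ) a ha.isUnit,
    ← cfc_mul _ _ a (by fun_prop (disch := assumption)) (by fun_prop (disch := assumption)),
    ← cfc_mul _ _ a (by fun_prop (disch := assumption)) (by fun_prop (disch := assumption)),
    ← cfc_sub _ _ a (by fun_prop (disch := assumption)) (by fun_prop (disch := assumption)),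
    cfc_isStrictlyPositive_iff _ a (by fun_prop (disch := assumption))]
  exact fun x hx => inv_sub_mul_inv_mul_pos (hpos x hx) (h x hx)

end CFC

theorem stmt12_general {n : ℕ} (C : Matrix (Fin n) (Fin n) ℝ) (hC : C.PosDef)
    (k d : ℝ)
    (hspec : ∀ i, |hC.1.eigenvalues i - d| < hC.1.eigenvalues i + k)
    (F : Matrix (Fin n) (Fin n) ℝ)
    (hF : F = (C + k • (1 : Matrix (Fin n) (Fin n) ℝ))⁻¹
        * (C - d • (1 : Matrix (Fin n) (Fin n) ℝ))) :
    (C⁻¹ - F * C⁻¹ * Fᵀ).PosDef := by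
  rw [← isStrictlyPositive_iff_posDef, nonsing_inv_eq_ringInverse,
    ← conjTranspose_eq_transpose_of_trivial, ← star_eq_conjTranspose]
  refine hC.isStrictlyPositive.ringInverse_sub_mul_ringInverse_mul_star (k := k) (d := d) ?_ F ?_
  · rw [hC.1.spectrum_real_eq_range_eigenvalues]
    rintro _ ⟨i, rfl⟩
    exact hspec i
  · rw [hF, nonsing_inv_eq_ringInverse, Algebra.algebraMap_eq_smul_one,
      Algebra.algebraMap_eq_smul_one]

theorem stmt12 {n : ℕ} (C : Matrix (Fin n) (Fin n) ℝ) (hC : C.PosDef)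
    (k d : ℝ) (hk : 0 < k)
    (hspec : ∀ i, |hC.1.eigenvalues i - d| < hC.1.eigenvalues i + k)
    (F : Matrix (Fin n) (Fin n) ℝ)
    (hF : F = (C + k • (1 : Matrix (Fin n) (Fin n) ℝ))⁻¹
        * (C - d • (1 : Matrix (Fin n) (Fin n) ℝ))) :
    (C⁻¹ - F * C⁻¹ * Fᵀ).PosDef :=
  stmt12_general C hC k d hspec F hF
end

section
/- Let S be symmetric positive definite, F an n×n matrix, and b a vector. If λ_max(F S⁻¹ Fᵀ S) < 1 and bᵀ(S⁻¹ − F S⁻¹ Fᵀ)⁻¹ b ≤ 1, then S⁻¹ − (F S⁻¹ Fᵀ + b bᵀ) is positive semidefinite, i.e., the MSEM of the estimator with covariance F S⁻¹ Fᵀ and bias b does not exceed S⁻¹ in the Loewner order. -/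
/-!
With `T = S^{1/2}` and `M = F S⁻¹ Fᵀ`, we have `T (S⁻¹ - M) T = 1 - T M T`, and `T M T` has the same
spectrum as `M S = M T T`; so `D = S⁻¹ - M` is positive definite. The block matrix
`[[D, b], [bᵀ, 1]]` is positive semidefinite iff either of its Schur complements `1 - bᵀ D⁻¹ b`
and `D - b bᵀ` is, and the first one is by assumption.
-/

open Matrix

variable {m : Type*} [Fintype m] [DecidableEq m]

theorem Matrix.spectrum_mul_comm {K : Type*} [Field K] (A B : Matrix m m K) :
    spectrum K (A * B) = spectrum K (B * A) := by
  ext μ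
  simp only [mem_spectrum_iff_isRoot_charpoly, charpoly_mul_comm]

open MatrixOrder in
theorem Matrix.IsHermitian.posDef_one_sub_s13 {A : Matrix m m ℝ} (hA : A.IsHermitian)
    (h : ∀ μ ∈ spectrum ℝ A, μ < 1) : (1 - A).PosDef := by
  rw [← isStrictlyPositive_iff_posDef,
    StarOrderedRing.isStrictlyPositive_iff_spectrum_pos (R := ℝ) _ (isHermitian_one.sub hA),
    ← map_one (algebraMap ℝ _), ← spectrum.singleton_sub_eq]
  rintro _ ⟨_, rfl, μ, hμ, rfl⟩
  exact sub_pos.2 (h μ hμ)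

open MatrixOrder in
theorem Matrix.PosDef.inv_sub {S M : Matrix m m ℝ} (hS : S.PosDef) (hM : M.IsHermitian)
    (h : ∀ μ ∈ spectrum ℝ (M * S), μ < 1) : (S⁻¹ - M).PosDef := by
  obtain ⟨T, hT, rfl⟩ : ∃ T : Matrix m m ℝ, T.PosDef ∧ S = T * T :=
    ⟨CFC.sqrt S, (IsStrictlyPositive.sqrt S hS.isStrictlyPositive).posDef,
      (CFC.sqrt_mul_sqrt_self S hS.posSemidef.nonneg).symm⟩
  have hTMT : (T * M * T).IsHermitian := by
    simpa only [hT.1.eq] using isHermitian_conjTranspose_mul_mul T hM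
  have hpos : (1 - T * M * T).PosDef := by
    refine hTMT.posDef_one_sub_s13 fun μ hμ => h μ ?_
    rwa [← Matrix.mul_assoc, spectrum_mul_comm, ← Matrix.mul_assoc]
  have := hT.isUnit.invertible
  rw [← hT.isUnit.posDef_star_left_conjugate_iff]
  convert hpos using 1
  rw [star_eq_conjTranspose, hT.1.eq, Matrix.mul_inv_rev]
  simp [Matrix.mul_sub, Matrix.sub_mul, Matrix.mul_assoc]

theorem Matrix.PosDef.posSemidef_sub_vecMulVec {D : Matrix m m ℝ} (hD : D.PosDef) {b : m → ℝ}
    (hb : b ⬝ᵥ (D⁻¹ *ᵥ b) ≤ 1) : (D - vecMulVec b b).PosSemidef := by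
  have := hD.isUnit.invertible
  have : Invertible (1 : Matrix Unit Unit ℝ) := invertibleOne
  set B := replicateCol Unit b
  have hschur : (1 - Bᴴ * D⁻¹ * B).PosSemidef := by
    have : 1 - Bᴴ * D⁻¹ * B = diagonal fun _ => 1 - b ⬝ᵥ (D⁻¹ *ᵥ b) := by
      rw [Matrix.mul_assoc, ← replicateCol_mulVec, conjTranspose_replicateCol, star_trivial,
        replicateRow_mul_replicateCol]
      ext
      simp
    rw [this, posSemidef_diagonal_iff]
    exact fun _ => sub_nonneg.2 hb
  have := (PosDef.fromBlocks₂₂ D B PosDef.one).1 ((PosDef.fromBlocks₁₁ B 1 hD).2 hschur)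
  rw [vecMulVec_eq Unit]
  simpa [B] using this

theorem stmt13 {n : ℕ} (S : Matrix (Fin n) (Fin n) ℝ) (hS : S.PosDef)
    (F : Matrix (Fin n) (Fin n) ℝ) (b : Fin n → ℝ)
    (hspec : ∀ μ ∈ spectrum ℝ (F * S⁻¹ * Fᵀ * S), μ < 1)
    (hbb : b ⬝ᵥ ((S⁻¹ - F * S⁻¹ * Fᵀ)⁻¹ *ᵥ b) ≤ 1) :
    (S⁻¹ - (F * S⁻¹ * Fᵀ + vecMulVec b b)).PosSemidef := by
  have hM : (F * S⁻¹ * Fᵀ).IsHermitian := by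
    simpa only [conjTranspose_eq_transpose_of_trivial] using
      isHermitian_mul_mul_conjTranspose F hS.inv.1
  rw [sub_add_eq_sub_sub]
  exact (hS.inv_sub hM hspec).posSemidef_sub_vecMulVec hbb
end

section
/- Let D be symmetric positive definite and b₁, b₂ vectors with b₁ᵀ(D + b₂b₂ᵀ)⁻¹b₁ ≤ 1. Then D + b₂b₂ᵀ − b₁b₁ᵀ is positive semidefinite. (Comparison of SRLTE with SRLE: MSEM(SRLE) − MSEM(SRLTE) ≥ 0 under the stated conditions.) -/
/-!
Both conditions say that the bordered matrix `[A b; bᴴ 1]`, with `A = D + b₂b₂ᵀ` positive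
definite, is positive semidefinite: its Schur complement with respect to the block `1` is
`A - bbᴴ`, and its Schur complement with respect to `A` is the `1 × 1` matrix `1 - bᴴA⁻¹b`.
-/

open Matrix

namespace Matrix

variable {ι K : Type*} [Fintype ι] [Field K] [PartialOrder K] [StarRing K] [StarOrderedRing K]

omit [PartialOrder K] [StarOrderedRing K] in
theorem conjTranspose_replicateCol_mul_mul_replicateCol (A : Matrix ι ι K) (b : ι → K) :
    (replicateCol Unit b)ᴴ * A * replicateCol Unit b = of fun _ _ => star b ⬝ᵥ (A *ᵥ b) := by
  rw [conjTranspose_replicateCol, Matrix.mul_assoc, ← replicateCol_mulVec,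
    replicateRow_mul_replicateCol]

omit [Fintype ι] in
theorem posSemidef_one_sub_of_const_iff (c : K) :
    (1 - of fun _ _ => c : Matrix Unit Unit K).PosSemidef ↔ c ≤ 1 := by
  have : (1 - of fun _ _ => c : Matrix Unit Unit K) = diagonal fun _ => 1 - c := by
    ext; simp
  rw [this, posSemidef_diagonal_iff]
  simp [sub_nonneg]

theorem PosDef.posSemidef_sub_vecMulVec_iff_s14 [DecidableEq ι] {A : Matrix ι ι K} (hA : A.PosDef)
    (b : ι → K) : (A - vecMulVec b (star b)).PosSemidef ↔ star b ⬝ᵥ (A⁻¹ *ᵥ b) ≤ 1 := by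
  have := hA.isUnit.invertible
  have : Invertible (1 : Matrix Unit Unit K) := invertibleOne
  let B := replicateCol Unit b
  calc (A - vecMulVec b (star b)).PosSemidef ↔ (fromBlocks A B Bᴴ 1).PosSemidef := by
        rw [PosDef.fromBlocks₂₂ A B (D := 1) PosDef.one, inv_one, Matrix.mul_one,
          conjTranspose_replicateCol, ← vecMulVec_eq]
    _ ↔ (1 - Bᴴ * A⁻¹ * B).PosSemidef := PosDef.fromBlocks₁₁ B 1 hA
    _ ↔ star b ⬝ᵥ (A⁻¹ *ᵥ b) ≤ 1 := by
        rw [conjTranspose_replicateCol_mul_mul_replicateCol, posSemidef_one_sub_of_const_iff]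

end Matrix

theorem stmt14 {n : ℕ} (D : Matrix (Fin n) (Fin n) ℝ) (hD : D.PosDef)
    (b₁ b₂ : Fin n → ℝ)
    (hb : b₁ ⬝ᵥ ((D + vecMulVec b₂ b₂)⁻¹ *ᵥ b₁) ≤ 1) :
    (D + vecMulVec b₂ b₂ - vecMulVec b₁ b₁).PosSemidef := by
  have hA : (D + vecMulVec b₂ b₂).PosDef := by
    simpa only [star_trivial] using hD.add_posSemidef (posSemidef_vecMulVec_self_star b₂)
  have hb' : star b₁ ⬝ᵥ ((D + vecMulVec b₂ b₂)⁻¹ *ᵥ b₁) ≤ 1 := by rwa [star_trivial]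
  simpa only [star_trivial] using (hA.posSemidef_sub_vecMulVec_iff_s14 b₁).mpr hb'
end
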